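/- For every finite simple graph H with at least one edge, s(H) ≥ 2δ(H) − 1, where δ(H) is the minimum degree of H. -/

import Mathlib

open SimpleGraph

/-- The subgraph of `F` consisting of the edges that receive color `b` under the
edge 2-coloring `c` (colors are `Bool`: `true` = red, `false` = blue). -/
def colorSubgraph {V : Type*} (F : SimpleGraph V) (c : Sym2 V → Bool) (b : Bool) :
    SimpleGraph V where
  Adj x y := F.Adj x y ∧ c s(x, y) = b
  symm := by
    constructor
    intro x y h
    exact ⟨h.1.symm, by rw [Sym2.eq_swap]; exact h.2⟩
  loopless := by
    constructor
    intro x h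
    exact F.irrefl h.1

/-- `G` contains a copy of `H`, i.e. a subgraph isomorphic to `H`. -/
def ContainsCopy {V W : Type*} (G : SimpleGraph V) (H : SimpleGraph W) : Prop :=
  ∃ f : W → V, Function.Injective f ∧ ∀ ⦃a b⦄, H.Adj a b → G.Adj (f a) (f b)

/-- The 2-coloring `c` of (the edges of) `F` contains a monochromatic copy of `H`. -/
def HasMonoCopy {V W : Type*} (F : SimpleGraph V) (H : SimpleGraph W)
    (c : Sym2 V → Bool) : Prop :=
  ∃ b : Bool, ContainsCopy (colorSubgraph F c b) H

/-- `F → H`: every 2-coloring of the edges of `F` contains a monochromatic copy of `H`. -/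
def IsRamseyFor {V W : Type*} (F : SimpleGraph V) (H : SimpleGraph W) : Prop :=
  ∀ c : Sym2 V → Bool, HasMonoCopy F H c

/-- `F` is Ramsey `H`-minimal: `F → H` but no proper subgraph of `F` is Ramsey for `H`. -/
def IsRamseyMinimalFor {V W : Type*} (F : SimpleGraph V) (H : SimpleGraph W) : Prop :=
  IsRamseyFor F H ∧ ∀ F' : F.Subgraph, F' ≠ ⊤ → ¬ IsRamseyFor F'.coe H

/-- The degree of the vertex `v` in `G`. -/
noncomputable def degOf {V : Type*} (G : SimpleGraph V) (v : V) : ℕ :=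
  (G.neighborSet v).ncard

/-- The minimum degree `δ(G)`. -/
noncomputable def minDeg {V : Type*} (G : SimpleGraph V) : ℕ :=
  sInf {k | ∃ v, degOf G v = k}

/-- `s(H)`: the minimum of `δ(F)` over all Ramsey `H`-minimal graphs `F`. -/
noncomputable def sVal {W : Type*} (H : SimpleGraph W) : ℕ :=
  sInf {k | ∃ (n : ℕ) (F : SimpleGraph (Fin n)), IsRamseyMinimalFor F H ∧ minDeg F = k}

/-!
Let `F` be Ramsey `H`-minimal and `v` a vertex of `F`. As `F - v` is not Ramsey for `H`, some
colouring of `F - v` has no monochromatic copy of `H`, so under every extension of it to `F`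
each monochromatic copy of `H` passes through `v`, and the vertex of `H` placed at `v` has at
least `δ(H)` neighbours in its colour. If `deg v ≤ 2δ(H) - 2`, colour the edges at `v` so that
each colour class has fewer than `δ(H)` of them; then there is no monochromatic copy at all,
contradicting `F → H`. The set of minimum degrees defining `s(H)` is nonempty (otherwise its
infimum would be `0`) by Ramsey's theorem and a descent on the number of vertices plus edges.
-/
open Finset

universe u

theorem exists_monochromatic_subset (r : Bool → ℕ) :
    ∃ N, ∀ {V : Type u} [DecidableEq V] (c : Sym2 V → Bool) (S : Finset V), N ≤ #S →
      ∃ b, ∃ A ⊆ S, r b ≤ #A ∧ (A : Set V).Pairwise fun x y => c s(x, y) = b := by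
  induction hn : r true + r false using Nat.strong_induction_on generalizing r with
  | _ n ih =>
  by_cases hr : ∃ b, r b = 0
  · obtain ⟨b, hb⟩ := hr
    exact ⟨0, fun _ _ _ => ⟨b, ∅, empty_subset _, by simp [hb], by simp⟩⟩
  push Not at hr
  set r' : Bool → Bool → ℕ := fun b => Function.update r b (r b - 1)
  have hlt : ∀ b, r' b true + r' b false < n := by
    have := hr true; have := hr false
    intro b; cases b <;> simp [r'] <;> omega
  choose N hN using fun b => ih _ (hlt b) (r' b) rfl
  refine ⟨N true + N false + 1, fun {V} _ c S hS => ?_⟩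
  obtain ⟨v, hv⟩ : S.Nonempty := card_pos.mp (by omega)
  have hsplit : ∑ b, N b ≤ ∑ b, #{u ∈ S.erase v | c s(v, u) = b} := by
    rw [← card_eq_sum_card_fiberwise fun _ _ => mem_univ _, card_erase_of_mem hv]
    simp only [Fintype.univ_bool, mem_singleton, Bool.true_eq_false, not_false_eq_true,
      sum_insert, sum_singleton]
    omega
  obtain ⟨b, -, hb⟩ := exists_le_of_sum_le univ_nonempty hsplit
  obtain ⟨b', A, hAT, hrA, hA⟩ := hN b c _ hb
  have hAS : A ⊆ S := hAT.trans ((filter_subset _ _).trans (erase_subset _ _))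
  by_cases hbb : b' = b
  · subst hbb
    -- every vertex of `A` is joined to `v` in colour `b'`, so `v` extends `A`
    have hvA : v ∉ A := fun h => by simpa using hAT h
    refine ⟨b', insert v A, insert_subset hv hAS, ?_, ?_⟩
    · rw [card_insert_of_notMem hvA]
      simp only [Function.update_self, tsub_le_iff_right, r'] at hrA
      omega
    · rw [coe_insert]
      refine hA.insert fun u hu _ => ?_
      have hvu : c s(v, u) = b' := (mem_filter.mp (hAT hu)).2
      exact ⟨hvu, by rwa [Sym2.eq_swap]⟩
  · exact ⟨b', A, hAS, by simpa [r', Function.update, hbb] using hrA, hA⟩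

section Ramsey

variable {V V' W : Type*} {F : SimpleGraph V} {H : SimpleGraph W}

theorem containsCopy_iff_isContained {G : SimpleGraph V} :
    ContainsCopy G H ↔ H ⊑ G :=
  ⟨fun ⟨f, hf, hadj⟩ => ⟨⟨⟨f, @hadj⟩, hf⟩⟩, fun ⟨f⟩ => ⟨f, f.injective, fun _ _ => f.toHom.map_adj⟩⟩

theorem isRamseyFor_iff : IsRamseyFor F H ↔ ∀ c, ∃ b, H ⊑ colorSubgraph F c b := by
  simp only [IsRamseyFor, HasMonoCopy, containsCopy_iff_isContained]

theorem exists_isRamseyFor_top [Fintype W] (H : SimpleGraph W) :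
    ∃ N, IsRamseyFor (⊤ : SimpleGraph (Fin N)) H := by
  obtain ⟨N, hN⟩ := exists_monochromatic_subset fun _ => Fintype.card W
  refine ⟨N, fun c => ?_⟩
  obtain ⟨b, A, -, hA, hmono⟩ := hN c univ (by simp)
  obtain ⟨g⟩ : Nonempty (W ↪ A) := Function.Embedding.nonempty_of_card_le (by simpa using hA)
  refine ⟨b, fun w => g w, Subtype.val_injective.comp g.injective, fun x y hxy => ?_⟩
  have hne : (g x : Fin N) ≠ g y := Subtype.val_injective.ne (g.injective.ne hxy.ne)
  exact ⟨hne, hmono (g x).2 (g y).2 hne⟩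

theorem IsRamseyFor.of_copy {G : SimpleGraph V'} (hF : IsRamseyFor F H) (f : Copy F G) :
    IsRamseyFor G H := by
  rw [isRamseyFor_iff] at hF ⊢
  intro c
  obtain ⟨b, hb⟩ := hF (c ∘ Sym2.map f)
  exact ⟨b, hb.trans ⟨⟨⟨f, fun h => ⟨f.toHom.map_adj h.1, h.2⟩⟩, f.injective⟩⟩⟩

end Ramsey

section Minimal

variable {V V' W : Type*}

noncomputable def graphSize (G : SimpleGraph V) : ℕ := Nat.card V + Nat.card G.edgeSet

theorem SimpleGraph.Copy.graphSize_le [Finite V'] {A : SimpleGraph V} {B : SimpleGraph V'}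
    (f : Copy A B) : graphSize A ≤ graphSize B :=
  add_le_add (Nat.card_le_card_of_injective f f.injective)
    (Finite.card_le_of_embedding f.mapEdgeSet)

theorem SimpleGraph.Subgraph.graphSize_coe_lt [Finite V] {G : SimpleGraph V} {K : G.Subgraph}
    (hK : K ≠ ⊤) : graphSize K.coe < graphSize G := by
  have hedges : Nat.card K.coe.edgeSet = Nat.card K.edgeSet := by
    rw [← K.image_coe_edgeSet_coe,
      Nat.card_image_of_injective (Sym2.map.injective Subtype.val_injective)]
  have hsub : K.edgeSet ⊆ G.edgeSet := K.edgeSet_subset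
  unfold graphSize
  rw [hedges]
  by_cases hverts : K.verts = Set.univ
  · have hlt : K.edgeSet ⊂ G.edgeSet := by
      refine hsub.ssubset_of_ne fun heq => hK ?_
      ext x y
      · simp [hverts]
      · simpa using congrArg (s(x, y) ∈ ·) heq
    have := (Set.toFinite G.edgeSet).card_lt_card hlt
    rw [hverts, Nat.card_univ]
    omega
  · have := Set.ncard_lt_card hverts
    have := Nat.card_mono (Set.toFinite _) hsub
    rw [Nat.card_coe_set_eq]
    omega

theorem IsRamseyFor.exists_isRamseyMinimalFor_fin [Finite V] {F : SimpleGraph V}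
    {H : SimpleGraph W} (hF : IsRamseyFor F H) :
    ∃ m, ∃ G : SimpleGraph (Fin m), IsRamseyMinimalFor G H := by
  classical
  have hP : ∃ k m, ∃ G : SimpleGraph (Fin m), IsRamseyFor G H ∧ graphSize G = k :=
    ⟨_, _, _, hF.of_copy (Iso.map (Finite.equivFin V) F).toCopy, rfl⟩
  obtain ⟨m, G, hG, hsize⟩ := Nat.find_spec hP
  refine ⟨m, G, hG, fun K hK hKR => ?_⟩
  -- a Ramsey proper subgraph, relabelled on `Fin _`, would have smaller size
  let e := Iso.map (Finite.equivFin K.verts) K.coe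
  have := Nat.find_min' hP ⟨_, _, hKR.of_copy e.toCopy, rfl⟩
  have := e.symm.toCopy.graphSize_le
  have := Subgraph.graphSize_coe_lt hK
  omega

end Minimal

theorem Set.Finite.exists_subset_ncard_le_ncard_diff_le {α : Type*} {s : Set α} {k : ℕ}
    (hs : s.Finite) (h : s.ncard ≤ 2 * k) : ∃ t ⊆ s, t.ncard ≤ k ∧ (s \ t).ncard ≤ k := by
  obtain ⟨t, hts, ht⟩ := Set.exists_subset_card_eq (min_le_right k s.ncard)
  refine ⟨t, hts, ht ▸ min_le_left _ _, ?_⟩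
  rw [Set.ncard_sdiff hts (hs.subset hts)]
  omega

section MinDegree

variable {V V' W : Type*} {F : SimpleGraph V} {H : SimpleGraph W}

theorem minDeg_le_degOf (G : SimpleGraph V) (v : V) : minDeg G ≤ degOf G v :=
  Nat.sInf_le ⟨v, rfl⟩

theorem exists_degOf_eq_minDeg [Nonempty V] (G : SimpleGraph V) : ∃ v, degOf G v = minDeg G :=
  Nat.sInf_mem (⟨_, Classical.arbitrary V, rfl⟩ : {k | ∃ v, degOf G v = k}.Nonempty)

theorem minDeg_of_isEmpty [IsEmpty V] (G : SimpleGraph V) : minDeg G = 0 := by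
  simp [minDeg]

theorem SimpleGraph.Copy.degOf_le [Finite V'] {A : SimpleGraph V} {B : SimpleGraph V'}
    (f : Copy A B) (v : V) : degOf A v ≤ degOf B (f v) := by
  rw [degOf, ← Set.ncard_image_of_injective _ f.injective]
  exact Set.ncard_le_ncard (by rintro _ ⟨u, hu, rfl⟩; exact f.toHom.map_adj hu) (Set.toFinite _)

open Classical in
noncomputable def recolorAt (c : Sym2 V → Bool) (v : V) (A : Set V) : Sym2 V → Bool :=
  fun e => if v ∈ e then decide (∃ a ∈ A, e = s(v, a)) else c e

theorem recolorAt_of_notMem {c : Sym2 V → Bool} {v : V} {A : Set V} {e : Sym2 V} (he : v ∉ e) :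
    recolorAt c v A e = c e :=
  if_neg he

theorem degOf_colorSubgraph_recolorAt_le [Finite V] {c : Sym2 V → Bool} {v : V} {A : Set V}
    {k : ℕ} (hA : A.ncard ≤ k) (hA' : (F.neighborSet v \ A).ncard ≤ k) (b : Bool) :
    degOf (colorSubgraph F (recolorAt c v A) b) v ≤ k := by
  have hcol : ∀ u, recolorAt c v A s(v, u) = true ↔ u ∈ A := by
    intro u
    simp only [recolorAt, Sym2.mem_mk_left, if_true, Sym2.congr_right, decide_eq_true_eq,
      exists_eq_right']
  cases b
  · refine le_trans (Set.ncard_le_ncard (t := F.neighborSet v \ A) ?_ (Set.toFinite _)) hA'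
    rintro u ⟨hadj, hu⟩
    exact ⟨hadj, fun h => by simp [(hcol u).mpr h] at hu⟩
  · refine le_trans (Set.ncard_le_ncard (t := A) ?_ (Set.toFinite _)) hA
    rintro u ⟨-, hu⟩
    exact (hcol u).mp hu

theorem IsRamseyMinimalFor.exists_coloring_forall_copy_mem_range (hF : IsRamseyMinimalFor F H)
    (v : V) : ∃ c₀ : Sym2 V → Bool, ∀ c : Sym2 V → Bool, (∀ e, v ∉ e → c e = c₀ e) →
      ∀ b (f : Copy H (colorSubgraph F c b)), v ∈ Set.range f := by
  set F' := (⊤ : F.Subgraph).deleteVerts {v}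
  have hF' : F' ≠ ⊤ := fun h => by simpa [F'] using congrArg (v ∈ ·.verts) h
  obtain ⟨c', hc'⟩ : ∃ c', ¬ HasMonoCopy F'.coe H c' := by
    simpa [IsRamseyFor] using hF.2 F' hF'
  refine ⟨Function.extend (Sym2.map (↑)) c' fun _ => true, fun c hc b f => ?_⟩
  by_contra hv
  have hfv : ∀ w, f w ≠ v := fun w h => hv ⟨w, h⟩
  have hmem : ∀ w, f w ∈ F'.verts := fun w => by simpa [F'] using hfv w
  let g : W → F'.verts := fun w => ⟨f w, hmem w⟩
  refine hc' ⟨b, g, fun x y h => f.injective (congrArg Subtype.val h), fun x y hxy => ?_⟩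
  obtain ⟨hadj, hcol⟩ : (colorSubgraph F c b).Adj (f x) (f y) := f.toHom.map_adj hxy
  have hvxy : v ∉ s(f x, f y) := by simpa using ⟨(hfv x).symm, (hfv y).symm⟩
  rw [hc _ hvxy] at hcol
  refine ⟨show F'.Adj (f x) (f y) by simpa [F'] using ⟨hfv x, hfv y, hadj⟩, ?_⟩
  have hext := (Sym2.map.injective Subtype.val_injective).extend_apply c' (fun _ => true)
    s(g x, g y)
  rw [Sym2.map_mk] at hext
  exact hext ▸ hcol

theorem IsRamseyMinimalFor.two_mul_minDeg_sub_one_le [Finite V] (hF : IsRamseyMinimalFor F H) :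
    2 * minDeg H - 1 ≤ minDeg F := by
  set δ := minDeg H
  rcases isEmpty_or_nonempty W with hW | hW
  · simp [δ, minDeg_of_isEmpty]
  have : Nonempty V := by
    obtain ⟨b, f, -⟩ := hF.1 fun _ => true
    exact ⟨f (Classical.arbitrary W)⟩
  by_contra! hlt
  obtain ⟨v, hv⟩ := exists_degOf_eq_minDeg F
  -- split the neighbourhood of `v` into two halves of size `< δ`, one per colour
  obtain ⟨A, -, hA, hA'⟩ := (F.neighborSet v).toFinite.exists_subset_ncard_le_ncard_diff_le
    (k := δ - 1) (by rw [← degOf, hv]; omega)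
  obtain ⟨c₀, hc₀⟩ := hF.exists_coloring_forall_copy_mem_range v
  obtain ⟨b, ⟨f⟩⟩ := isRamseyFor_iff.mp hF.1 (recolorAt c₀ v A)
  obtain ⟨w, hw⟩ := hc₀ _ (fun _ he => recolorAt_of_notMem he) b f
  have hδ : δ ≤ δ - 1 := calc
    δ ≤ degOf H w := minDeg_le_degOf H w
    _ ≤ degOf (colorSubgraph F (recolorAt c₀ v A) b) (f w) := f.degOf_le w
    _ ≤ δ - 1 := by rw [hw]; exact degOf_colorSubgraph_recolorAt_le hA hA' b
  omega

end MinDegree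

theorem stmt_0_general (W : Type) [Fintype W] (H : SimpleGraph W) :
    2 * minDeg H - 1 ≤ sVal H := by
  obtain ⟨N, hN⟩ := exists_isRamseyFor_top H
  obtain ⟨m, G, hG⟩ := hN.exists_isRamseyMinimalFor_fin
  exact le_csInf ⟨minDeg G, m, G, hG, rfl⟩ fun _ ⟨_, _, hF, hk⟩ =>
    hk ▸ hF.two_mul_minDeg_sub_one_le

/-- For every finite simple graph `H` with at least one edge, `s(H) ≥ 2δ(H) − 1`. -/
theorem stmt_0 (W : Type) [Fintype W] (H : SimpleGraph W)
    (hedge : H.edgeSet.Nonempty) :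
    2 * minDeg H - 1 ≤ sVal H :=
  stmt_0_general W H
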